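/- arXiv:1303.6321 — 9 statements merged into one kernel-verified Lean document; each statement's English description precedes it below -/
import Mathlib

section
/- If a_1,...,a_n are real numbers with a_1+...+a_n = 1, then there exists t in [0,π] such that S(t) = Σ_{j=1}^n a_j sin(jt) = 0 and C(t) = Σ_{j=1}^n a_j cos(jt) < 0. -/
/-!
Put `f(z) = ∑ a_j z^j`, so that `f(e^{it}) = C(t) + i S(t)`, `f(0) = 0` and `f(1) = 1`. Suppose
`f` takes no negative real value on the unit circle. Then for every `ε > 0` the polynomial `f + ε`
maps the circle into the slit plane `ℂ \ (-∞, 0]`, where `log` is holomorphic; hence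
`∮ (f + ε)'/(f + ε) = 0`, and by the argument principle `f + ε` has no zero in the open unit disc.
All its roots then have modulus at least one, so `ε = |(f + ε)(0)| ≥ |lc f|`, which fails for
small `ε`. Finally, since `S` is odd and `C` even, a negative real value at `e^{iθ}` with
`θ ∈ (-π, π]` yields one at `e^{i|θ|}`.
-/

open Real Finset Metric Set Polynomial
open Complex (I slitPlane)

open scoped Classical in
theorem circleIntegral.integral_multiset_sum_sub_inv (s : Multiset ℂ) {c : ℂ} {R : ℝ}
    (hR : 0 ≤ R) (hs : ∀ r ∈ s, r ∉ sphere c R) :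
    (∮ z in C(c, R), (s.map fun r => (z - r)⁻¹).sum) =
      2 * π * I * (s.filter (· ∈ ball c R)).card := by
  have hcont : ∀ r ∉ sphere c R, ContinuousOn (fun z => (z - r)⁻¹) (sphere c R) :=
    fun r hr => (continuous_sub_right r).continuousOn.inv₀ fun z hz h =>
      hr (by rwa [sub_eq_zero.1 h] at hz)
  induction s using Multiset.induction_on with
  | empty => simp [circleIntegral]
  | cons r s ih =>
    have hr := hs r (Multiset.mem_cons_self r s)
    have hs' : ∀ r' ∈ s, r' ∉ sphere c R := fun r' hr' => hs r' (Multiset.mem_cons_of_mem hr')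
    have hint_sum : CircleIntegrable (fun z => (s.map fun r => (z - r)⁻¹).sum) c R :=
      ContinuousOn.circleIntegrable hR <|
        continuousOn_multiset_sum _ fun r' hr' => hcont r' (hs' r' hr')
    simp only [Multiset.map_cons, Multiset.sum_cons]
    rw [circleIntegral.integral_add ((hcont r hr).circleIntegrable hR) hint_sum, ih hs',
      Multiset.filter_cons]
    by_cases hball : r ∈ ball c R
    · simp [hball, circleIntegral.integral_sub_inv_of_mem_ball hball]
      ring
    · have hout : r ∉ closedBall c R := by
        rw [← ball_union_sphere]; exact fun h => h.elim hball hr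
      have hzero : (∮ z in C(c, R), (z - r)⁻¹) = 0 := by
        refine DiffContOnCl.circleIntegral_eq_zero hR (DifferentiableOn.diffContOnCl ?_)
        refine ((differentiableOn_id.sub_const r).inv fun z hz h => hout ?_)
        exact sub_eq_zero.1 h ▸ closure_ball_subset_closedBall hz
      simp [hball, hzero]

namespace Polynomial

open scoped Classical in
theorem circleIntegral_derivative_div_eval (p : ℂ[X]) {c : ℂ} {R : ℝ} (hR : 0 ≤ R)
    (hp : ∀ z ∈ sphere c R, p.eval z ≠ 0) :
    (∮ z in C(c, R), p.derivative.eval z / p.eval z) =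
      2 * π * I * (p.roots.filter (· ∈ ball c R)).card := by
  rw [circleIntegral.integral_congr hR fun z hz =>
      (IsAlgClosed.splits p).eval_derivative_div_eval_of_ne_zero (hp z hz)]
  simp only [one_div]
  exact circleIntegral.integral_multiset_sum_sub_inv _ hR fun r hr hsph =>
    hp r hsph (isRoot_of_mem_roots hr)

theorem circleIntegral_derivative_div_eval_eq_zero (p : ℂ[X]) {c : ℂ} {R : ℝ} (hR : 0 ≤ R)
    (hp : MapsTo (fun z => p.eval z) (sphere c R) slitPlane) :
    (∮ z in C(c, R), p.derivative.eval z / p.eval z) = 0 :=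
  circleIntegral.integral_eq_zero_of_hasDerivWithinAt hR fun z hz =>
    ((p.hasDerivAt z).clog (hp hz)).hasDerivWithinAt

theorem eval_ne_zero_of_mem_ball_of_mapsTo_slitPlane (p : ℂ[X]) {c w : ℂ} {R : ℝ}
    (hp : MapsTo (fun z => p.eval z) (sphere c R) slitPlane) (hw : w ∈ ball c R) :
    p.eval w ≠ 0 := by
  classical
  intro hpw
  have hR : 0 ≤ R := dist_nonneg.trans (mem_ball.1 hw).le
  have hp0 : p ≠ 0 := by
    rintro rfl
    obtain ⟨z, hz⟩ := (NormedSpace.sphere_nonempty (x := c)).2 hR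
    exact Complex.zero_notMem_slitPlane (by simpa using hp hz)
  have hcard : (p.roots.filter (· ∈ ball c R)).card = 0 := by
    have h := (circleIntegral_derivative_div_eval p hR fun z hz =>
      Complex.slitPlane_ne_zero (hp hz)).symm.trans
      (circleIntegral_derivative_div_eval_eq_zero p hR hp)
    simpa [pi_ne_zero, Complex.I_ne_zero] using h
  rw [Multiset.card_eq_zero, Multiset.filter_eq_nil] at hcard
  exact hcard w ((mem_roots hp0).2 hpw) hw

theorem norm_leadingCoeff_le_norm_eval_zero (p : ℂ[X]) (hp : ∀ z, p.eval z = 0 → 1 ≤ ‖z‖) :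
    ‖p.leadingCoeff‖ ≤ ‖p.eval 0‖ := by
  rw [(IsAlgClosed.splits p).eval_eq_prod_roots, norm_mul,
    ← normHom_apply (Multiset.prod _), map_multiset_prod]
  refine le_mul_of_one_le_right (norm_nonneg _) ?_
  rw [Multiset.map_map]
  refine Multiset.one_le_prod_map fun r hr => ?_
  simpa using hp r (isRoot_of_mem_roots hr)

theorem exists_mem_sphere_eval_im_eq_zero_re_neg (p : ℂ[X]) (hp : p ≠ 0) (hp0 : p.eval 0 = 0) :
    ∃ z ∈ sphere (0 : ℂ) 1, (p.eval z).im = 0 ∧ (p.eval z).re < 0 := by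
  by_contra! h
  have hlc : 0 < ‖p.leadingCoeff‖ := norm_pos_iff.2 (leadingCoeff_ne_zero.2 hp)
  set ε : ℝ := ‖p.leadingCoeff‖ / 2
  have hε : 0 < ε := half_pos hlc
  set q := p + C (ε : ℂ)
  have hq : MapsTo (fun z => q.eval z) (sphere 0 1) slitPlane := by
    intro z hz
    rw [Complex.mem_slitPlane_iff]
    by_cases him : (p.eval z).im = 0
    · left; simpa [q] using add_pos_of_nonneg_of_pos (h z hz him) hε
    · right; simpa [q] using him
  have hlc_q : q.leadingCoeff = p.leadingCoeff :=
    leadingCoeff_add_of_degree_lt' (degree_C_le.trans_lt (degree_pos_of_root hp hp0))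
  have hbound := norm_leadingCoeff_le_norm_eval_zero q fun z hz => by
    by_contra! hz1
    exact eval_ne_zero_of_mem_ball_of_mapsTo_slitPlane q hq (mem_ball_zero_iff.2 hz1) hz
  rw [hlc_q] at hbound
  simp [q, hp0, ε] at hbound
  linarith

theorem eval_sum_C_mul_X_pow_exp_mul_I (s : Finset ℕ) (a : ℕ → ℝ) (t : ℝ) :
    (∑ j ∈ s, C (a j : ℂ) * X ^ j).eval (Complex.exp (t * I)) =
      (∑ j ∈ s, a j * Real.cos (j * t) : ℝ) + (∑ j ∈ s, a j * Real.sin (j * t) : ℝ) * I := by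
  simp only [eval_finsetSum, eval_mul, eval_C, eval_pow, eval_X, ← Complex.exp_nat_mul]
  push_cast
  rw [Finset.sum_mul, ← Finset.sum_add_distrib]
  refine Finset.sum_congr rfl fun j _ => ?_
  rw [← mul_assoc, Complex.exp_mul_I]
  ring

end Polynomial

theorem exists_mem_Icc_zero_pi_of_mem_Ioc (s : Finset ℕ) (a : ℕ → ℝ) {θ : ℝ}
    (hθ : θ ∈ Ioc (-π) π) (hS : ∑ j ∈ s, a j * Real.sin (j * θ) = 0)
    (hC : ∑ j ∈ s, a j * Real.cos (j * θ) < 0) :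
    ∃ t ∈ Icc 0 π, ∑ j ∈ s, a j * Real.sin (j * t) = 0 ∧ ∑ j ∈ s, a j * Real.cos (j * t) < 0 := by
  rcases le_or_gt 0 θ with h | h
  · exact ⟨θ, ⟨h, hθ.2⟩, hS, hC⟩
  · refine ⟨-θ, ⟨by linarith, by linarith [hθ.1]⟩, ?_, ?_⟩
    · simp [mul_neg, Real.sin_neg, hS]
    · simpa [mul_neg, Real.cos_neg] using hC

theorem stmt_0_general (n : ℕ) (a : ℕ → ℝ)
    (ha : ∑ j ∈ Finset.Icc 1 n, a j = 1) :
    ∃ t ∈ Set.Icc (0:ℝ) Real.pi,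
      (∑ j ∈ Finset.Icc 1 n, a j * Real.sin (j * t)) = 0 ∧
      (∑ j ∈ Finset.Icc 1 n, a j * Real.cos (j * t)) < 0 := by
  set f : ℂ[X] := ∑ j ∈ Icc 1 n, C (a j : ℂ) * X ^ j
  have hf1 : f.eval 1 = 1 := by
    simpa [ha] using eval_sum_C_mul_X_pow_exp_mul_I (Icc 1 n) a 0
  have hf0 : f.eval 0 = 0 := by
    simp only [f, eval_finsetSum, eval_mul, eval_C, eval_pow, eval_X]
    exact sum_eq_zero fun j hj => by rw [zero_pow (by grind), mul_zero]
  obtain ⟨z, hz, him, hre⟩ :=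
    exists_mem_sphere_eval_im_eq_zero_re_neg f (by rintro h; simp [h] at hf1) hf0
  have hz_exp : Complex.exp (Complex.arg z * I) = z := by
    simpa [mem_sphere_zero_iff_norm.1 hz] using Complex.norm_mul_exp_arg_mul_I z
  rw [← hz_exp, eval_sum_C_mul_X_pow_exp_mul_I] at him hre
  simp only [Complex.add_im, Complex.add_re, Complex.ofReal_re, Complex.ofReal_im,
    Complex.mul_I_re, Complex.mul_I_im, zero_add, neg_zero, add_zero] at him hre
  exact exists_mem_Icc_zero_pi_of_mem_Ioc _ a
    ⟨Complex.neg_pi_lt_arg z, Complex.arg_le_pi z⟩ him hre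

theorem stmt_0 (n : ℕ) (hn : 1 ≤ n) (a : ℕ → ℝ)
    (ha : ∑ j ∈ Finset.Icc 1 n, a j = 1) :
    ∃ t ∈ Set.Icc (0:ℝ) Real.pi,
      (∑ j ∈ Finset.Icc 1 n, a j * Real.sin (j * t)) = 0 ∧
      (∑ j ∈ Finset.Icc 1 n, a j * Real.cos (j * t)) < 0 :=
  stmt_0_general n a ha
end

section
/- Let S(t) = Σ_{j=1}^n a_j sin(jt) and suppose S(t_1) = 0 for some t_1 in the open interval (0,π). Then there exist unique real coefficients b_1,...,b_{n-1} such that S(t) = (cos t - cos t_1) · Σ_{j=1}^{n-1} b_j sin(jt) for all t. -/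
/-!
Since 2 cos t sin(jt) = sin((j+1)t) + sin((j-1)t), synthetic division from the top degree
writes S(t) = (cos t - cos t₁) B(t) + r sin t with B a sine polynomial of degree n - 1;
evaluating at t₁, where sin t₁ ≠ 0, gives r = 0. For uniqueness, (cos t - cos t₁) B(t) ≡ 0
forces B ≡ 0 (at the zeros of the first factor, differentiate: sin does not vanish there),
and the coefficients of B are recovered from B by the orthogonality of the sines on [0, π].
-/

open Real Finset

noncomputable def sinPoly (a : ℕ → ℝ) (n : ℕ) (t : ℝ) : ℝ :=
  ∑ j ∈ Icc 1 n, a j * sin (j * t)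

theorem sinPoly_succ (a : ℕ → ℝ) (n : ℕ) (t : ℝ) :
    sinPoly a (n + 1) t = sinPoly a n t + a (n + 1) * sin ((n + 1) * t) := by
  rw [sinPoly, sum_Icc_succ_top (by omega)]
  push_cast
  rfl

theorem sinPoly_congr {a b : ℕ → ℝ} {n : ℕ} (h : ∀ j ∈ Icc 1 n, a j = b j) :
    sinPoly a n = sinPoly b n :=
  funext fun _ => sum_congr rfl fun j hj => by rw [h j hj]

theorem differentiable_sinPoly (a : ℕ → ℝ) (n : ℕ) : Differentiable ℝ (sinPoly a n) := by
  unfold sinPoly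
  fun_prop

theorem sin_add_two_mul_add_sin_mul (x t : ℝ) :
    sin ((x + 2) * t) + sin (x * t) = 2 * cos t * sin ((x + 1) * t) := by
  rw [mul_assoc, mul_comm (cos t), ← mul_assoc, two_mul_sin_mul_cos]
  ring_nf

/- The two top coefficients `p`, `q` are kept apart from `a`: reducing `q sin ((k + 2) t)` by
the three-term recurrence changes exactly the two coefficients below it. -/
theorem exists_sinPoly_add_eq_cos_sub_mul_add (c : ℝ) (a : ℕ → ℝ) (k : ℕ) (p q : ℝ) :
    ∃ (b : ℕ → ℝ) (r : ℝ), ∀ t,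
      sinPoly a k t + p * sin ((k + 1) * t) + q * sin ((k + 2) * t) =
        (cos t - c) * sinPoly b (k + 1) t + r * sin t := by
  induction k generalizing p q with
  | zero =>
    refine ⟨fun _ => 2 * q, p + 2 * c * q, fun t => ?_⟩
    simp only [sinPoly, Order.lt_one_iff, Icc_eq_empty_of_lt, sum_empty, CharP.cast_eq_zero,
      zero_add, one_mul, sin_two_mul, Icc_self, sum_singleton, Nat.cast_one]
    ring
  | succ k ih =>
    obtain ⟨b, r, hb⟩ := ih (a (k + 1) - q) (p + 2 * c * q)
    refine ⟨Function.update b (k + 1 + 1) (2 * q), r, fun t => ?_⟩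
    have hb' : sinPoly (Function.update b (k + 1 + 1) (2 * q)) (k + 1) = sinPoly b (k + 1) :=
      sinPoly_congr fun j hj => Function.update_of_ne (by rw [mem_Icc] at hj; omega) _ _
    have hrec := sin_add_two_mul_add_sin_mul (k + 1) t
    rw [sinPoly_succ, sinPoly_succ _ (k + 1), hb', Function.update_self]
    push_cast
    rw [show (k : ℝ) + 1 + 1 = k + 2 by ring] at hrec ⊢
    linear_combination hb t + q * hrec

theorem exists_sinPoly_eq_cos_sub_mul_add (c : ℝ) (a : ℕ → ℝ) (m : ℕ) :
    ∃ (b : ℕ → ℝ) (r : ℝ), ∀ t,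
      sinPoly a (m + 2) t = (cos t - c) * sinPoly b (m + 1) t + r * sin t := by
  obtain ⟨b, r, hbr⟩ := exists_sinPoly_add_eq_cos_sub_mul_add c a m (a (m + 1)) (a (m + 2))
  refine ⟨b, r, fun t => ?_⟩
  rw [← hbr, sinPoly_succ, sinPoly_succ]
  push_cast
  ring_nf

theorem exists_sinPoly_eq_cos_sub_mul {a : ℕ → ℝ} {m : ℕ} {t₁ : ℝ} (ht₁ : sin t₁ ≠ 0)
    (hS : sinPoly a (m + 2) t₁ = 0) :
    ∃ b : ℕ → ℝ, ∀ t, sinPoly a (m + 2) t = (cos t - cos t₁) * sinPoly b (m + 1) t := by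
  obtain ⟨b, r, hbr⟩ := exists_sinPoly_eq_cos_sub_mul_add (cos t₁) a m
  have hr : r = 0 := by
    have h := hbr t₁
    rw [hS, sub_self, zero_mul, zero_add, eq_comm, mul_eq_zero] at h
    exact h.resolve_right ht₁
  exact ⟨b, fun t => by rw [hbr t, hr, zero_mul, add_zero]⟩

theorem integral_cos_int_mul (m : ℤ) :
    ∫ x in (0)..π, cos (m * x) = if m = 0 then π else 0 := by
  split_ifs with hm
  · simp [hm]
  · rw [intervalIntegral.integral_comp_mul_left _ (Int.cast_ne_zero.mpr hm), integral_cos]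
    simp [sin_int_mul_pi]

theorem integral_sin_mul_sin (j : ℕ) {k : ℕ} (hk : k ≠ 0) :
    ∫ x in (0)..π, sin (j * x) * sin (k * x) = if j = k then π / 2 else 0 := by
  have hprod (x : ℝ) : sin (j * x) * sin (k * x) =
      (cos (((j - k : ℤ) : ℝ) * x) - cos (((j + k : ℤ) : ℝ) * x)) / 2 := by
    push_cast
    rw [sub_mul, add_mul, ← two_mul_sin_mul_sin]
    ring
  simp_rw [hprod]
  rw [intervalIntegral.integral_div, intervalIntegral.integral_sub
    (Continuous.intervalIntegrable (by fun_prop) _ _)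
    (Continuous.intervalIntegrable (by fun_prop) _ _), integral_cos_int_mul, integral_cos_int_mul]
  split_ifs <;> first | omega | ring

theorem integral_sinPoly_mul_sin (a : ℕ → ℝ) (n : ℕ) {k : ℕ} (hk : k ∈ Icc 1 n) :
    ∫ x in (0)..π, sinPoly a n x * sin (k * x) = π / 2 * a k := by
  have hk₀ : k ≠ 0 := by rw [mem_Icc] at hk; omega
  simp only [sinPoly, sum_mul, mul_assoc]
  rw [intervalIntegral.integral_finsetSum fun _ _ => Continuous.intervalIntegrable (by fun_prop) _ _]
  simp only [intervalIntegral.integral_const_mul, integral_sin_mul_sin _ hk₀, mul_ite, mul_zero,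
    sum_ite_eq', hk, if_true]
  ring

theorem eq_of_sinPoly_eq {a b : ℕ → ℝ} {n : ℕ} (h : sinPoly a n = sinPoly b n) {k : ℕ}
    (hk : k ∈ Icc 1 n) : a k = b k := by
  have hab := integral_sinPoly_mul_sin a n hk
  rw [h, integral_sinPoly_mul_sin b n hk] at hab
  exact (mul_left_cancel₀ (by positivity) hab).symm

theorem eq_of_forall_cos_sub_mul_eq {c : ℝ} (hc₁ : c ≠ 1) (hc₂ : c ≠ -1) {f g : ℝ → ℝ}
    (hf : Differentiable ℝ f) (hg : Differentiable ℝ g)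
    (h : ∀ t, (cos t - c) * f t = (cos t - c) * g t) : f = g := by
  funext s
  by_cases hs : cos s = c
  · have hsin : sin s ≠ 0 := by rw [Ne, sin_eq_zero_iff_cos_eq, hs]; tauto
    have hderiv :=
      ((hasDerivAt_cos s).sub_const c).fun_mul ((hf s).hasDerivAt.fun_sub (hg s).hasDerivAt)
    have hzero : (fun t => (cos t - c) * (f t - g t)) = fun _ => 0 :=
      funext fun t => by rw [mul_sub, h, sub_self]
    rw [hzero, hs, sub_self, zero_mul, add_zero] at hderiv
    have h0 := (hasDerivAt_const s (0 : ℝ)).unique hderiv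
    exact sub_eq_zero.mp ((mul_eq_zero.mp h0.symm).resolve_left (neg_ne_zero.mpr hsin))
  · exact mul_left_cancel₀ (sub_ne_zero.mpr hs) (h s)

theorem stmt_1 (n : ℕ) (hn : 2 ≤ n) (a : ℕ → ℝ) (t₁ : ℝ)
    (ht₁ : t₁ ∈ Set.Ioo 0 Real.pi)
    (hS : ∑ j ∈ Finset.Icc 1 n, a j * Real.sin (j * t₁) = 0) :
    ∃! b : ℕ → ℝ, (∀ j, j ∉ Finset.Icc 1 (n - 1) → b j = 0) ∧
      ∀ t : ℝ, ∑ j ∈ Finset.Icc 1 n, a j * Real.sin (j * t) =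
        (Real.cos t - Real.cos t₁) *
          ∑ j ∈ Finset.Icc 1 (n - 1), b j * Real.sin (j * t) := by
  obtain ⟨m, rfl⟩ : ∃ m, n = m + 2 := ⟨n - 2, by omega⟩
  change ∃! b : ℕ → ℝ, (∀ j, j ∉ Icc 1 (m + 1) → b j = 0) ∧
    ∀ t, sinPoly a (m + 2) t = (cos t - cos t₁) * sinPoly b (m + 1) t
  have hsin : sin t₁ ≠ 0 := (sin_pos_of_pos_of_lt_pi ht₁.1 ht₁.2).ne'
  have hc : cos t₁ ≠ 1 ∧ cos t₁ ≠ -1 := by simpa [sin_eq_zero_iff_cos_eq, not_or] using hsin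
  obtain ⟨b, hb⟩ := exists_sinPoly_eq_cos_sub_mul hsin hS
  refine ⟨fun j => if j ∈ Icc 1 (m + 1) then b j else 0, ⟨fun j hj => if_neg hj, fun t => ?_⟩, ?_⟩
  · rw [hb t, sinPoly_congr fun j hj => if_pos hj]
  · rintro b' ⟨hb'₀, hb'⟩
    have hpoly : sinPoly b' (m + 1) = sinPoly b (m + 1) :=
      eq_of_forall_cos_sub_mul_eq hc.1 hc.2 (differentiable_sinPoly _ _)
        (differentiable_sinPoly _ _) fun t => (hb' t).symm.trans (hb t)
    funext j
    by_cases hj : j ∈ Icc 1 (m + 1)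
    · rw [eq_of_sinPoly_eq hpoly hj, if_pos hj]
    · rw [hb'₀ j hj, if_neg hj]
end

section
/- Let t_1,...,t_m ∈ (0,π) be such that S(t_j) = 0 for all j = 1,...,m, where m < n. Then there exist unique real coefficients c_1,...,c_{n-m} such that S(t) = ∏_{j=1}^m (cos t - cos t_j) · Σ_{j=1}^{n-m} c_j sin(jt) for all t. -/
/-! Since `sin (k x) = sin x · U_{k-1}(cos x)` for the Chebyshev polynomials `U` of the second
kind, `S(x) = sin x · P(cos x)` with `P = ∑ a_k U_{k-1}` of degree `< n`, and the `U_{k-1}`,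
`1 ≤ k ≤ N`, form a basis of the polynomials of degree `< N` (`U_j` has degree `j`). The zeros
`t_j` make the distinct numbers `cos t_j` roots of `P`, so `P = ∏ (X - cos t_j) · Q` with
`deg Q < n - m`, and the coordinates of `Q` in that basis are the `c_k`. Uniqueness holds
because an identity `sin x · p(cos x) = sin x · q(cos x)` for all `x` forces `p = q` (`cos`
takes infinitely many values where `sin ≠ 0`), after which the monic product cancels. -/

open Real Finset Polynomial Polynomial.Chebyshev

theorem Polynomial.prod_X_sub_C_dvd_of_isRoot {K ι : Type*} [Field K] {s : Finset ι}
    {r : ι → K} (hr : Set.InjOn r s) {p : K[X]} (hp : ∀ i ∈ s, p.IsRoot (r i)) :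
    ∏ i ∈ s, (X - C (r i)) ∣ p :=
  Finset.prod_dvd_of_coprime
    (fun _ hi _ hj hij =>
      isCoprime_X_sub_C_of_isUnit_sub (sub_ne_zero_of_ne (hr.ne hi hj hij)).isUnit)
    fun i hi => dvd_iff_isRoot.2 (hp i hi)

section Algebra

variable {R : Type*} [CommRing R]

noncomputable def chebyshevUSeries (c : ℕ → R) (N : ℕ) : R[X] :=
  ∑ k ∈ Icc 1 N, c k • U R (k - 1 : ℕ)

theorem chebyshevUSeries_succ (c : ℕ → R) (N : ℕ) :
    chebyshevUSeries c (N + 1) = chebyshevUSeries c N + c (N + 1) • U R N := by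
  simp only [chebyshevUSeries, sum_Icc_succ_top (Nat.le_add_left 1 N), Nat.add_sub_cancel]

variable [IsDomain R] [NeZero (2 : R)]

theorem degree_chebyshevUSeries_lt (c : ℕ → R) (N : ℕ) :
    (chebyshevUSeries c N).degree < N := by
  refine (degree_sum_le _ _).trans_lt ((Finset.sup_lt_iff (WithBot.bot_lt_coe N)).2 ?_)
  intro k hk
  calc (c k • U R (k - 1 : ℕ)).degree ≤ (U R (k - 1 : ℕ)).degree := degree_smul_le _ _
    _ < N := by rw [degree_U_natCast]; exact_mod_cast (by grind : k - 1 < N)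

theorem coeff_U_natCast_self (n : ℕ) : (U R n).coeff n = 2 ^ n := by
  rw [← leadingCoeff_U_natCast R n, leadingCoeff, natDegree_U_natCast]

theorem coeff_chebyshevUSeries_succ (c : ℕ → R) (N : ℕ) :
    (chebyshevUSeries c (N + 1)).coeff N = c (N + 1) * 2 ^ N := by
  rw [chebyshevUSeries_succ, coeff_add,
    coeff_eq_zero_of_degree_lt (degree_chebyshevUSeries_lt c N), zero_add, coeff_smul,
    coeff_U_natCast_self, smul_eq_mul]

theorem chebyshevUSeries_eq_iff {c c' : ℕ → R} {N : ℕ} :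
    chebyshevUSeries c N = chebyshevUSeries c' N ↔ ∀ k ∈ Icc 1 N, c k = c' k := by
  induction N with
  | zero => simp [chebyshevUSeries]
  | succ N ih =>
    refine ⟨fun h => ?_, fun h => sum_congr rfl fun k hk => by rw [h k hk]⟩
    have top : c (N + 1) = c' (N + 1) := by
      have := congrArg (coeff · N) h
      simp only [coeff_chebyshevUSeries_succ] at this
      exact mul_right_cancel₀ (pow_ne_zero N two_ne_zero) this
    rw [chebyshevUSeries_succ, chebyshevUSeries_succ, top, add_left_inj, ih] at h
    intro k hk
    rcases (mem_Icc.1 hk).2.lt_or_eq with hlt | rfl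
    · exact h k (mem_Icc.2 ⟨(mem_Icc.1 hk).1, Nat.le_of_lt_succ hlt⟩)
    · exact top

end Algebra

section Field

variable {K : Type*} [Field K] [NeZero (2 : K)]

theorem exists_chebyshevUSeries_eq {N : ℕ} {Q : K[X]} (hQ : Q.degree < N) :
    ∃ c : ℕ → K, (∀ j, j ∉ Icc 1 N → c j = 0) ∧ chebyshevUSeries c N = Q := by
  induction N generalizing Q with
  | zero => exact ⟨0, fun _ _ => rfl, by simp_all [chebyshevUSeries]⟩
  | succ N ih =>
    obtain ⟨d, hd⟩ : ∃ d : K, d * 2 ^ N = Q.coeff N :=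
      ⟨_, div_mul_cancel₀ _ (pow_ne_zero N two_ne_zero)⟩
    have hQ' : (Q - d • U K N).degree < N := by
      refine (degree_lt_iff_coeff_zero _ _).2 fun k hk => ?_
      rw [coeff_sub, coeff_smul, smul_eq_mul]
      rcases hk.eq_or_lt with rfl | hlt
      · rw [coeff_U_natCast_self, hd, sub_self]
      · rw [coeff_eq_zero_of_degree_lt (hQ.trans_le (by exact_mod_cast hlt)),
          coeff_eq_zero_of_degree_lt (by rw [degree_U_natCast]; exact_mod_cast hlt), mul_zero,
          sub_zero]
    obtain ⟨c, hc, hcQ⟩ := ih hQ'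
    refine ⟨Function.update c (N + 1) d, fun j hj => ?_, ?_⟩
    · rw [Function.update_of_ne (by grind)]
      exact hc j (by grind)
    · rw [chebyshevUSeries_succ, Function.update_self,
        (chebyshevUSeries_eq_iff (c' := c)).2 fun k hk => Function.update_of_ne (by grind) _ _,
        hcQ, sub_add_cancel]

theorem existsUnique_chebyshevUSeries_eq {N : ℕ} {Q : K[X]} (hQ : Q.degree < N) :
    ∃! c : ℕ → K, (∀ j, j ∉ Icc 1 N → c j = 0) ∧ chebyshevUSeries c N = Q := by
  refine existsUnique_of_exists_of_unique (exists_chebyshevUSeries_eq hQ) ?_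
  rintro c c' ⟨hc, rfl⟩ ⟨hc', h⟩
  funext k
  by_cases hk : k ∈ Icc 1 N
  · exact chebyshevUSeries_eq_iff.1 h.symm k hk
  · rw [hc k hk, hc' k hk]

end Field

theorem sin_mul_eval_cos_chebyshevUSeries (c : ℕ → ℝ) (N : ℕ) (x : ℝ) :
    sin x * (chebyshevUSeries c N).eval (cos x) = ∑ k ∈ Icc 1 N, c k * sin (k * x) := by
  rw [chebyshevUSeries, eval_finsetSum, mul_sum]
  refine sum_congr rfl fun k hk => ?_
  have hk1 : (((k - 1 : ℕ) : ℤ) : ℝ) + 1 = k := by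
    push_cast [Nat.cast_sub (mem_Icc.1 hk).1]
    ring
  rw [eval_smul, smul_eq_mul, ← hk1, ← U_real_cos]
  ring

theorem Polynomial.eq_of_forall_sin_mul_eval_cos_eq {p q : ℝ[X]}
    (h : ∀ x, sin x * p.eval (cos x) = sin x * q.eval (cos x)) : p = q := by
  refine eq_of_infinite_eval_eq p q ((Set.Ioo_infinite (show (-1 : ℝ) < 1 by norm_num)).mono ?_)
  intro y hy
  have hsin : sin (arccos y) ≠ 0 :=
    (sin_pos_of_pos_of_lt_pi (arccos_pos.2 hy.2) (arccos_lt_pi.2 hy.1)).ne'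
  simpa [cos_arccos hy.1.le hy.2.le, hsin] using h (arccos y)

theorem sum_sin_eq_prod_mul_sum_sin_iff {ι : Type*} (s : Finset ι) (τ : ι → ℝ) (a c : ℕ → ℝ)
    (n N : ℕ) :
    (∀ x, ∑ k ∈ Icc 1 n, a k * sin (k * x) =
        (∏ j ∈ s, (cos x - cos (τ j))) * ∑ k ∈ Icc 1 N, c k * sin (k * x)) ↔
      chebyshevUSeries a n = (∏ j ∈ s, (X - C (cos (τ j)))) * chebyshevUSeries c N := by
  have eval_prod_X_sub_C (x : ℝ) :
      (∏ j ∈ s, (X - C (cos (τ j)))).eval (cos x) = ∏ j ∈ s, (cos x - cos (τ j)) := by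
    simp [eval_prod]
  simp only [← sin_mul_eval_cos_chebyshevUSeries]
  refine ⟨fun h => eq_of_forall_sin_mul_eval_cos_eq fun x => ?_, fun h x => ?_⟩
  · rw [h, eval_mul, eval_prod_X_sub_C]
    ring
  · rw [h, eval_mul, eval_prod_X_sub_C]
    ring

theorem stmt_5_general (n m : ℕ) (a : ℕ → ℝ) (t : ℕ → ℝ)
    (ht : ∀ j ∈ Finset.Icc 1 m, t j ∈ Set.Ioo 0 Real.pi)
    (hdist : ∀ i ∈ Finset.Icc 1 m, ∀ j ∈ Finset.Icc 1 m, t i = t j → i = j)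
    (hS : ∀ j ∈ Finset.Icc 1 m,
      ∑ k ∈ Finset.Icc 1 n, a k * Real.sin (k * t j) = 0) :
    ∃! c : ℕ → ℝ, (∀ j, j ∉ Finset.Icc 1 (n - m) → c j = 0) ∧
      ∀ x : ℝ, ∑ k ∈ Finset.Icc 1 n, a k * Real.sin (k * x) =
        (∏ j ∈ Finset.Icc 1 m, (Real.cos x - Real.cos (t j))) *
          ∑ k ∈ Finset.Icc 1 (n - m), c k * Real.sin (k * x) := by
  set r : ℝ[X] := ∏ j ∈ Icc 1 m, (X - C (cos (t j)))
  have hr : r.Monic := monic_prod_of_monic _ _ fun j _ => monic_X_sub_C _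
  have hroot : ∀ j ∈ Icc 1 m, (chebyshevUSeries a n).IsRoot (cos (t j)) := fun j hj =>
    (mul_eq_zero.1 ((sin_mul_eval_cos_chebyshevUSeries a n (t j)).trans (hS j hj))).resolve_left
      (sin_pos_of_pos_of_lt_pi (ht j hj).1 (ht j hj).2).ne'
  have hinj : Set.InjOn (fun j => cos (t j)) (Icc 1 m : Finset ℕ) := fun i hi j hj hij =>
    hdist i hi j hj (injOn_cos (Set.Ioo_subset_Icc_self (ht i hi))
      (Set.Ioo_subset_Icc_self (ht j hj)) hij)
  obtain ⟨Q, hQ⟩ := prod_X_sub_C_dvd_of_isRoot hinj hroot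
  have hQdeg : Q.degree < (n - m : ℕ) := by
    rcases eq_or_ne Q 0 with rfl | hQ0
    · simp
    have hrdeg : r.natDegree = m := by
      simp [r, natDegree_prod_of_monic, monic_X_sub_C]
    have hdeg : (r * Q).natDegree < n := (natDegree_lt_iff_degree_lt
      (mul_ne_zero hr.ne_zero hQ0)).2 (hQ ▸ degree_chebyshevUSeries_lt a n)
    rw [hr.natDegree_mul' hQ0, hrdeg] at hdeg
    rw [degree_eq_natDegree hQ0]
    exact_mod_cast (by omega : Q.natDegree < n - m)
  refine (existsUnique_congr fun c => ?_).1 (existsUnique_chebyshevUSeries_eq hQdeg)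
  rw [sum_sin_eq_prod_mul_sum_sin_iff, hQ, mul_right_inj' hr.ne_zero, eq_comm]

theorem stmt_5 (n m : ℕ) (hm : 1 ≤ m) (hmn : m < n) (a : ℕ → ℝ) (t : ℕ → ℝ)
    (ht : ∀ j ∈ Finset.Icc 1 m, t j ∈ Set.Ioo 0 Real.pi)
    (hdist : ∀ i ∈ Finset.Icc 1 m, ∀ j ∈ Finset.Icc 1 m, t i = t j → i = j)
    (hS : ∀ j ∈ Finset.Icc 1 m,
      ∑ k ∈ Finset.Icc 1 n, a k * Real.sin (k * t j) = 0) :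
    ∃! c : ℕ → ℝ, (∀ j, j ∉ Finset.Icc 1 (n - m) → c j = 0) ∧
      ∀ x : ℝ, ∑ k ∈ Finset.Icc 1 n, a k * Real.sin (k * x) =
        (∏ j ∈ Finset.Icc 1 m, (Real.cos x - Real.cos (t j))) *
          ∑ k ∈ Finset.Icc 1 (n - m), c k * Real.sin (k * x) :=
  stmt_5_general n m a t ht hdist hS
end

section
/- Suppose S(t) = ∏_{j=1}^m (cos t - cos t_j) · Σ_{j=m}^{n-m} c_j sin(jt), where t_1,...,t_m are pairwise distinct points in (0,π) and 2 ≤ m ≤ n/2. Then the conjugate polynomial C satisfies C(t_1) = C(t_2) = ... = C(t_m), and in fact C(t_j) = -c_m/2^m for each j. -/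
/-!
Put F(z) = ∑ a_k z^k, so that F(e^{ix}) = C(x) + i S(x). On the unit circle
z² - 2 cos(θ) z + 1 = 2z (cos x - cos θ), hence the real polynomial
G(z) = 2^{-m} (∏_j (z² - 2 cos(t_j) z + 1) · ∑_k c_k z^{k-m} - c_m)
satisfies Im G(e^{ix}) = S(x) and G(0) = 0. A real polynomial p taking real values on the unit
circle satisfies p(1/z) = p(z) there, so z^N p(z) agrees with the reversed polynomial on infinitely
many points and p is constant. Thus F = G, and at z = e^{i t_j} the product vanishes, leaving
C(t_j) = Re G(e^{i t_j}) = -c_m / 2^m.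
-/

open Real Finset

namespace Polynomial

theorem eq_C_coeff_zero_of_eval_inv_eq {K : Type*} [Field K] (q : K[X]) {s : Set K}
    (hs : s.Infinite) (h : ∀ z ∈ s, q.eval z⁻¹ = q.eval z) : q = C (q.coeff 0) := by
  set N := q.natDegree
  have hreflect : X ^ N * q = reflect N q := by
    refine eq_of_infinite_eval_eq _ _ ((hs.sdiff (Set.finite_singleton 0)).mono ?_)
    rintro z ⟨hz, hz0 : z ≠ 0⟩
    have : Invertible z⁻¹ := invertibleOfNonzero (inv_ne_zero hz0)
    have hrefl := eval₂_reflect_mul_pow (RingHom.id K) z⁻¹ N q le_rfl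
    rw [invOf_eq_inv, inv_inv] at hrefl
    change (reflect N q).eval z * z⁻¹ ^ N = q.eval z⁻¹ at hrefl
    simp only [Set.mem_ofPred_eq, eval_mul, eval_pow, eval_X, ← h z hz, ← hrefl]
    rw [mul_left_comm, ← mul_pow, mul_inv_cancel₀ hz0, one_pow, mul_one]
  ext k
  rcases Nat.eq_zero_or_pos k with rfl | hk
  · simp
  · have := congrArg (coeff · (k + N)) hreflect
    simp only [coeff_X_pow_mul, coeff_reflect, revAt_eq_self_of_lt (by omega : N < k + N)] at this
    rw [this, coeff_C, if_neg hk.ne', coeff_eq_zero_of_natDegree_lt (by omega)]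

theorem eq_C_coeff_zero_of_im_aeval_exp_mul_I_eq_zero (p : ℝ[X])
    (h : ∀ x : ℝ, (aeval (Complex.exp (x * Complex.I)) p).im = 0) : p = C (p.coeff 0) := by
  have hcircle : (Set.range fun x : ℝ => Complex.exp (x * Complex.I)).Infinite := by
    refine ((Set.Icc_infinite pi_pos).image fun x hx y hy hxy => injOn_cos hx hy ?_).mono
      (Set.image_subset_range _ _)
    simpa only [Complex.exp_ofReal_mul_I_re] using congrArg Complex.re hxy
  apply map_injective _ (algebraMap ℝ ℂ).injective
  rw [map_C, ← coeff_map]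
  refine eq_C_coeff_zero_of_eval_inv_eq _ hcircle ?_
  rintro _ ⟨x, rfl⟩
  have hinv : (Complex.exp (x * Complex.I))⁻¹ = starRingEnd ℂ (Complex.exp (x * Complex.I)) := by
    rw [← Complex.exp_conj, ← Complex.exp_neg]; simp
  rw [hinv, eval_map_algebraMap, eval_map_algebraMap, aeval_conj]
  exact Complex.conj_eq_iff_im.mpr (h x)

end Polynomial

open Polynomial

section ExpSums

variable (s : Finset ℕ) (b : ℕ → ℝ) (x : ℝ)

theorem exp_mul_I_pow (k : ℕ) :
    Complex.exp (x * Complex.I) ^ k = Complex.exp ((k * x : ℝ) * Complex.I) := by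
  rw [← Complex.exp_nat_mul]; push_cast; ring_nf

theorem re_sum_mul_exp_mul_I_pow :
    (∑ k ∈ s, (b k : ℂ) * Complex.exp (x * Complex.I) ^ k).re = ∑ k ∈ s, b k * cos (k * x) := by
  simp only [Complex.re_sum, exp_mul_I_pow, Complex.re_ofReal_mul, Complex.exp_ofReal_mul_I_re]

theorem im_sum_mul_exp_mul_I_pow :
    (∑ k ∈ s, (b k : ℂ) * Complex.exp (x * Complex.I) ^ k).im = ∑ k ∈ s, b k * sin (k * x) := by
  simp only [Complex.im_sum, exp_mul_I_pow, Complex.im_ofReal_mul, Complex.exp_ofReal_mul_I_im]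

theorem aeval_sum_C_mul_X_pow (z : ℂ) :
    aeval z (∑ k ∈ s, C (b k) * X ^ k) = ∑ k ∈ s, (b k : ℂ) * z ^ k := by
  simp [map_sum]

end ExpSums

theorem aeval_exp_mul_I_quadratic (x θ : ℝ) :
    aeval (Complex.exp (x * Complex.I)) (X ^ 2 - C (2 * cos θ) * X + 1 : ℝ[X]) =
      2 * Complex.exp (x * Complex.I) * (cos x - cos θ : ℝ) := by
  have h2cos : 2 * (cos x : ℂ) = Complex.exp (x * Complex.I) + (Complex.exp (x * Complex.I))⁻¹ := by
    rw [Complex.ofReal_cos, Complex.two_cos, neg_mul, Complex.exp_neg]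
  have hz : Complex.exp (x * Complex.I) ≠ 0 := Complex.exp_ne_zero _
  simp only [map_add, map_sub, map_mul, map_pow, aeval_X, aeval_C, map_one,
    Complex.coe_algebraMap, Complex.ofReal_sub, Complex.ofReal_ofNat]
  linear_combination -Complex.exp (x * Complex.I) * h2cos - mul_inv_cancel₀ hz

noncomputable def nodePoly (m : ℕ) (t : ℕ → ℝ) : ℝ[X] :=
  ∏ j ∈ Icc 1 m, (X ^ 2 - C (2 * cos (t j)) * X + 1)

theorem aeval_exp_mul_I_nodePoly (m : ℕ) (t : ℕ → ℝ) (x : ℝ) :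
    aeval (Complex.exp (x * Complex.I)) (nodePoly m t) =
      (2 * Complex.exp (x * Complex.I)) ^ m * (∏ j ∈ Icc 1 m, (cos x - cos (t j)) : ℝ) := by
  simp only [nodePoly, map_prod, aeval_exp_mul_I_quadratic, prod_mul_distrib, prod_const, mul_pow,
    Nat.card_Icc, Nat.add_sub_cancel, Complex.ofReal_prod]

noncomputable def factoredPoly (m n : ℕ) (c t : ℕ → ℝ) : ℝ[X] :=
  C ((2 : ℝ) ^ m)⁻¹ * (nodePoly m t * ∑ k ∈ Icc m (n - m), C (c k) * X ^ (k - m) - C (c m))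

theorem aeval_exp_mul_I_factoredPoly (m n : ℕ) (c t : ℕ → ℝ) (x : ℝ) :
    aeval (Complex.exp (x * Complex.I)) (factoredPoly m n c t) =
      (∏ j ∈ Icc 1 m, (cos x - cos (t j)) : ℝ) *
          ∑ k ∈ Icc m (n - m), (c k : ℂ) * Complex.exp (x * Complex.I) ^ k -
        (c m / 2 ^ m : ℝ) := by
  rw [factoredPoly, map_mul, map_sub, map_mul, aeval_exp_mul_I_nodePoly]
  set z := Complex.exp (x * Complex.I)
  have hshift : z ^ m * ∑ k ∈ Icc m (n - m), (c k : ℂ) * z ^ (k - m) =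
      ∑ k ∈ Icc m (n - m), (c k : ℂ) * z ^ k := by
    rw [mul_sum]
    refine sum_congr rfl fun k hk => ?_
    rw [mul_left_comm, ← pow_add, Nat.add_sub_cancel' (mem_Icc.1 hk).1]
  simp only [map_sum, map_mul, aeval_C, aeval_X_pow, Complex.coe_algebraMap, ← hshift]
  push_cast
  field_simp
  ring

theorem coeff_zero_factoredPoly {m n : ℕ} (hmn : 2 * m ≤ n) (c t : ℕ → ℝ) :
    (factoredPoly m n c t).coeff 0 = 0 := by
  have hnode : (nodePoly m t).eval 0 = 1 := by
    simp [nodePoly, eval_prod]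
  have hshift : (∑ k ∈ Icc m (n - m), C (c k) * X ^ (k - m)).eval 0 = c m := by
    rw [eval_finsetSum, sum_eq_single m]
    · simp
    · intro k hk hkm
      simp [Nat.sub_ne_zero_of_lt (lt_of_le_of_ne (mem_Icc.1 hk).1 (Ne.symm hkm))]
    · exact fun hm_notMem => absurd (mem_Icc.2 ⟨le_rfl, by omega⟩) hm_notMem
  simp [coeff_zero_eq_eval_zero, factoredPoly, hnode, hshift]

theorem sum_C_mul_X_pow_eq_factoredPoly {n m : ℕ} (hmn : 2 * m ≤ n) {a c t : ℕ → ℝ}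
    (hrep : ∀ x : ℝ, ∑ k ∈ Icc 1 n, a k * sin (k * x) =
      (∏ j ∈ Icc 1 m, (cos x - cos (t j))) * ∑ k ∈ Icc m (n - m), c k * sin (k * x)) :
    ∑ k ∈ Icc 1 n, C (a k) * X ^ k = factoredPoly m n c t := by
  refine sub_eq_zero.1 ((eq_C_coeff_zero_of_im_aeval_exp_mul_I_eq_zero _ fun x => ?_).trans ?_)
  · rw [map_sub, aeval_sum_C_mul_X_pow, aeval_exp_mul_I_factoredPoly, Complex.sub_im,
      Complex.sub_im, Complex.im_ofReal_mul, im_sum_mul_exp_mul_I_pow, im_sum_mul_exp_mul_I_pow,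
      Complex.ofReal_im, hrep, sub_zero, sub_self]
  · rw [coeff_sub, coeff_zero_factoredPoly hmn, finsetSum_coeff]
    simp

theorem stmt_9_general (n m : ℕ) (hmn : 2 * m ≤ n) (a c : ℕ → ℝ) (t : ℕ → ℝ)
    (hrep : ∀ x : ℝ, ∑ k ∈ Finset.Icc 1 n, a k * Real.sin (k * x) =
      (∏ j ∈ Finset.Icc 1 m, (Real.cos x - Real.cos (t j))) *
        ∑ k ∈ Finset.Icc m (n - m), c k * Real.sin (k * x)) :
    ∀ j ∈ Finset.Icc 1 m,
      ∑ k ∈ Finset.Icc 1 n, a k * Real.cos (k * t j) = -c m / 2 ^ m := by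
  intro j hj
  have hvalue := congrArg (aeval (Complex.exp (t j * Complex.I)))
    (sum_C_mul_X_pow_eq_factoredPoly hmn hrep)
  rw [aeval_sum_C_mul_X_pow, aeval_exp_mul_I_factoredPoly, prod_eq_zero hj (sub_self _)] at hvalue
  have hre := congrArg Complex.re hvalue
  rwa [Complex.ofReal_zero, zero_mul, zero_sub, Complex.neg_re, Complex.ofReal_re,
    re_sum_mul_exp_mul_I_pow, ← neg_div] at hre

theorem stmt_9 (n m : ℕ) (hm : 2 ≤ m) (hmn : 2 * m ≤ n) (a c : ℕ → ℝ) (t : ℕ → ℝ)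
    (ht : ∀ j ∈ Finset.Icc 1 m, t j ∈ Set.Ioo 0 Real.pi)
    (hdist : ∀ i ∈ Finset.Icc 1 m, ∀ j ∈ Finset.Icc 1 m, t i = t j → i = j)
    (hrep : ∀ x : ℝ, ∑ k ∈ Finset.Icc 1 n, a k * Real.sin (k * x) =
      (∏ j ∈ Finset.Icc 1 m, (Real.cos x - Real.cos (t j))) *
        ∑ k ∈ Finset.Icc m (n - m), c k * Real.sin (k * x)) :
    ∀ j ∈ Finset.Icc 1 m,
      ∑ k ∈ Finset.Icc 1 n, a k * Real.cos (k * t j) = -c m / 2 ^ m :=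
  stmt_9_general n m hmn a c t hrep
end

section
/- Define a_j = 2 tan(π/(2(n+1))) · (1 - j/(n+1)) · sin(πj/(n+1)) for j = 1,...,n. Then Σ_{j=1}^n a_j = 1. -/
/-!
Put `N = n + 1` and `x = π / (2N)`, so that `π j / N = 2 j x`. Since
`2 sin x sin 2jx = cos (2j-1)x - cos (2j+1)x`, the partial sums of `sin 2jx` telescope, and
counting the weight `N - j` as the number of partial sums containing the `j`-th term gives
`2 sin x · ∑_{j<N} (N - j) sin 2jx = N cos x - ∑_{k<N} cos (2k+1)x`. The last sum vanishes,
because `2 sin x` times it telescopes to `sin 2Nx = sin π = 0`. Dividing by `N cos x`, which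
is nonzero as soon as `N ≥ 2`, gives the claim.
-/

open Real Finset

theorem sum_range_nsmul_sub_eq_sum_partial_sums {M : Type*} [AddCommMonoid M] (f : ℕ → M)
    (N : ℕ) : ∑ j ∈ range N, (N - j) • f j = ∑ k ∈ range N, ∑ j ∈ range (k + 1), f j := by
  induction N with
  | zero => simp
  | succ N ih =>
    have hsplit : ∀ j ∈ range N, (N + 1 - j) • f j = (N - j) • f j + f j := by
      intro j hj
      rw [Nat.sub_add_comm (mem_range.1 hj).le, succ_nsmul]
    rw [sum_range_succ, sum_congr rfl hsplit, sum_add_distrib, ih, sum_range_succ _ N,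
      Nat.add_sub_cancel_left, one_smul, add_assoc, ← sum_range_succ]

theorem two_sin_mul_sum_range_sin_two_mul (x : ℝ) (m : ℕ) :
    2 * sin x * ∑ j ∈ range m, sin (2 * j * x) = cos x - cos ((2 * m - 1) * x) := by
  induction m with
  | zero => simp
  | succ m ih =>
    have hstep : 2 * sin x * sin (2 * m * x) = cos ((2 * m - 1) * x) - cos ((2 * m + 1) * x) := by
      rw [cos_sub_cos, show ((2 * m - 1) * x + (2 * m + 1) * x) / 2 = 2 * m * x by ring,
        show ((2 * m - 1) * x - (2 * m + 1) * x) / 2 = -x by ring, sin_neg]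
      ring
    rw [sum_range_succ, mul_add, ih, hstep]
    push_cast
    ring_nf

theorem two_sin_mul_sum_range_cos_odd (x : ℝ) (m : ℕ) :
    2 * sin x * ∑ k ∈ range m, cos ((2 * k + 1) * x) = sin (2 * m * x) := by
  induction m with
  | zero => simp
  | succ m ih =>
    have hstep : 2 * sin x * cos ((2 * m + 1) * x) = sin ((2 * m + 2) * x) - sin (2 * m * x) := by
      rw [sin_sub_sin, show ((2 * m + 2) * x - 2 * m * x) / 2 = x by ring,
        show ((2 * m + 2) * x + 2 * m * x) / 2 = (2 * m + 1) * x by ring]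
    rw [sum_range_succ, mul_add, ih, hstep]
    push_cast
    ring_nf

theorem two_sin_mul_sum_range_weighted_sin (x : ℝ) (N : ℕ) :
    2 * sin x * ∑ j ∈ range N, ((N : ℝ) - j) * sin (2 * j * x) =
      N * cos x - ∑ k ∈ range N, cos ((2 * k + 1) * x) := by
  have hweights : ∑ j ∈ range N, ((N : ℝ) - j) * sin (2 * j * x) =
      ∑ j ∈ range N, (N - j) • sin (2 * j * x) := by
    refine sum_congr rfl fun j hj => ?_
    rw [nsmul_eq_mul, Nat.cast_sub (mem_range.1 hj).le]
  rw [hweights, sum_range_nsmul_sub_eq_sum_partial_sums, mul_sum]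
  simp only [two_sin_mul_sum_range_sin_two_mul, sum_sub_distrib, sum_const, card_range,
    nsmul_eq_mul]
  congr 1
  refine sum_congr rfl fun k _ => ?_
  push_cast
  ring_nf

theorem sum_range_cos_odd_mul_pi_div_eq_zero {N : ℕ} (hN : 0 < N) :
    ∑ k ∈ range N, cos ((2 * k + 1) * (π / (2 * N))) = 0 := by
  have hsin : 0 < sin (π / (2 * N)) :=
    sin_pos_of_pos_of_lt_pi (by positivity) (div_lt_self pi_pos (by norm_cast; omega))
  have h := two_sin_mul_sum_range_cos_odd (π / (2 * N)) N
  rw [show 2 * (N : ℝ) * (π / (2 * N)) = π by field_simp, sin_pi] at h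
  simpa [hsin.ne'] using h

theorem sum_range_two_tan_mul_one_sub_div_mul_sin {N : ℕ} (hN : 2 ≤ N) :
    ∑ j ∈ range N, 2 * tan (π / (2 * N)) * (1 - (j : ℝ) / N) * sin (π * j / N) = 1 := by
  set x := π / (2 * N) with hx
  have hN' : (2 : ℝ) ≤ N := by exact_mod_cast hN
  have hxpos : 0 < x := by positivity
  have hcos : 0 < cos x := cos_pos_of_mem_Ioo ⟨by linarith [pi_pos], by
    rw [hx, div_lt_div_iff₀ (by positivity) two_pos]; nlinarith [pi_pos]⟩
  have hsum : 2 * sin x * ∑ j ∈ range N, ((N : ℝ) - j) * sin (2 * j * x) = N * cos x := by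
    rw [two_sin_mul_sum_range_weighted_sin, sum_range_cos_odd_mul_pi_div_eq_zero (by omega),
      sub_zero]
  have hterm : ∀ j ∈ range N, 2 * tan x * (1 - (j : ℝ) / N) * sin (π * j / N) =
      (N * cos x)⁻¹ * (2 * sin x * (((N : ℝ) - j) * sin (2 * j * x))) := by
    intro j _
    rw [tan_eq_sin_div_cos, show 2 * (j : ℝ) * x = π * j / N by rw [hx]; field_simp]
    field_simp
  rw [sum_congr rfl hterm, ← mul_sum, ← mul_sum, hsum, inv_mul_cancel₀ (by positivity)]

theorem stmt_12 (n : ℕ) (hn : 1 ≤ n) :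
    ∑ j ∈ Finset.Icc 1 n,
      2 * Real.tan (Real.pi / (2 * (n + 1))) * (1 - (j : ℝ) / (n + 1)) *
        Real.sin (Real.pi * j / (n + 1)) = 1 := by
  have h := sum_range_two_tan_mul_one_sub_div_mul_sin (N := n + 1) (by omega)
  rw [range_eq_Ico, sum_eq_sum_Ico_succ_bot (Nat.succ_pos n)] at h
  rw [← Ico_add_one_right_eq_Icc]
  push_cast at h
  simpa using h
end

section
/- With a_j = 2 tan(π/(2(n+1))) · (1 - j/(n+1)) · sin(πj/(n+1)) for j = 1,...,n, the sine polynomial S(t) = Σ_{j=1}^n a_j sin(jt) satisfies S(t) ≥ 0 for all t ∈ [0,π]. -/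
/-!
Put `N = n + 1`, `θ = π / N` and `F x = ∑ (N - j) cos (j x)`. Since
`2 sin (jθ) sin (jt) = cos (j (t - θ)) - cos (j (t + θ))`, the sum is `tan (θ / 2) / N` times
`F (t - θ) - F (t + θ)`. The Fejér identity `2 sin² (x/2) F x = sin² (N x / 2) - N sin² (x / 2)`
has, at both `x = t ± θ`, the same numerator `sin² (N x / 2) = cos² (N t / 2)`; hence
`F (t - θ) - F (t + θ) = cos² (N t / 2) / 2 * (1 / sin² ((t - θ) / 2) - 1 / sin² ((t + θ) / 2))`,
which is nonnegative because `sin² ((t + θ) / 2) - sin² ((t - θ) / 2) = sin t sin θ ≥ 0`.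
At `t = θ`, where `sin ((t - θ) / 2) = 0`, also `cos (N t / 2) = 0`, so `F (2θ) = -N / 2 < 0 ≤ F 0`.
-/

open Real Finset

lemma two_mul_sin_sq_mul_cos_two_mul (b y : ℝ) :
    2 * sin y ^ 2 * cos (2 * b) = sin (b + y) ^ 2 - 2 * sin b ^ 2 + sin (b - y) ^ 2 := by
  rw [sin_add, sin_sub, cos_two_mul]
  linear_combination (2 * sin y ^ 2) * sin_sq_add_cos_sq b - (2 * sin b ^ 2) * sin_sq_add_cos_sq y

lemma sin_sq_sub_sin_sq (a b : ℝ) : sin a ^ 2 - sin b ^ 2 = sin (a + b) * sin (a - b) := by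
  rw [sin_add, sin_sub]
  linear_combination sin b ^ 2 * sin_sq_add_cos_sq a - sin a ^ 2 * sin_sq_add_cos_sq b

lemma two_mul_sin_sq_half_mul_sum_cos (m : ℕ) (x : ℝ) :
    2 * sin (x / 2) ^ 2 * ∑ j ∈ Icc 1 m, cos (j * x) =
      sin ((m + 1) * x / 2) ^ 2 - sin (m * x / 2) ^ 2 - sin (x / 2) ^ 2 := by
  induction m with
  | zero => simp
  | succ m ih =>
    have step := two_mul_sin_sq_mul_cos_two_mul ((m + 1) * x / 2) (x / 2)
    rw [sum_Icc_succ_top (by omega), mul_add, ih]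
    push_cast
    ring_nf at step ⊢
    linear_combination step

/-- `(n + 1) + 2 * fejerCosSum n x` is the Fejér kernel `sin ((n + 1) x / 2) ^ 2 / sin (x / 2) ^ 2`. -/
noncomputable def fejerCosSum (n : ℕ) (x : ℝ) : ℝ :=
  ∑ j ∈ Icc 1 n, ((n : ℝ) + 1 - j) * cos (j * x)

lemma fejerCosSum_succ (n : ℕ) (x : ℝ) :
    fejerCosSum (n + 1) x = fejerCosSum n x + ∑ j ∈ Icc 1 (n + 1), cos (j * x) := by
  have top_vanishes : ∑ j ∈ Icc 1 (n + 1), ((n : ℝ) + 1 - j) * cos (j * x) = fejerCosSum n x := by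
    rw [sum_Icc_succ_top (by omega)]
    simp [fejerCosSum]
  rw [← top_vanishes, ← sum_add_distrib, fejerCosSum]
  refine sum_congr rfl fun j _ => ?_
  push_cast
  ring

lemma two_mul_sin_sq_half_mul_fejerCosSum (n : ℕ) (x : ℝ) :
    2 * sin (x / 2) ^ 2 * fejerCosSum n x =
      sin ((n + 1) * x / 2) ^ 2 - (n + 1) * sin (x / 2) ^ 2 := by
  induction n with
  | zero => simp [fejerCosSum]
  | succ n ih =>
    rw [fejerCosSum_succ, mul_add, ih, two_mul_sin_sq_half_mul_sum_cos]
    push_cast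
    ring

lemma fejerCosSum_zero_nonneg (n : ℕ) : 0 ≤ fejerCosSum n 0 := by
  refine sum_nonneg fun j hj => ?_
  have : (j : ℝ) ≤ n := by exact_mod_cast (mem_Icc.mp hj).2
  simp only [mul_zero, cos_zero, mul_one]
  linarith

lemma fejerCosSum_add_le_sub {n : ℕ} (hn : 1 ≤ n) {t : ℝ} (ht : t ∈ Set.Icc 0 π) :
    fejerCosSum n (t + π / (n + 1)) ≤ fejerCosSum n (t - π / (n + 1)) := by
  obtain ⟨ht0, htπ⟩ := ht
  set N : ℝ := (n : ℝ) + 1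
  set θ := π / N
  have hN : 2 ≤ N := by simp only [N]; norm_cast; omega
  have hθ0 : 0 < θ := by positivity
  have hθπ : θ < π := div_lt_self pi_pos (by linarith)
  have hNθ : N * θ = π := mul_div_cancel₀ _ (by positivity)
  have hsub := two_mul_sin_sq_half_mul_fejerCosSum n (t - θ)
  have hadd := two_mul_sin_sq_half_mul_fejerCosSum n (t + θ)
  rw [show N * (t - θ) / 2 = N * t / 2 - π / 2 by rw [← hNθ]; ring, sin_sub_pi_div_two,
    neg_sq] at hsub
  rw [show N * (t + θ) / 2 = N * t / 2 + π / 2 by rw [← hNθ]; ring, sin_add_pi_div_two] at hadd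
  have hs_add : 0 < sin ((t + θ) / 2) := sin_pos_of_pos_of_lt_pi (by linarith) (by linarith)
  obtain rfl | hne := eq_or_ne t θ
  · have hcos : cos (N * θ / 2) = 0 := by rw [hNθ, cos_pi_div_two]
    rw [hcos] at hadd
    have hF : sin ((θ + θ) / 2) ^ 2 * (2 * fejerCosSum n (θ + θ)) =
        sin ((θ + θ) / 2) ^ 2 * -N := by linear_combination hadd
    rw [sub_self]
    linarith [mul_left_cancel₀ (pow_pos hs_add 2).ne' hF, fejerCosSum_zero_nonneg n]
  · have hs_sub : sin ((t - θ) / 2) ≠ 0 := fun h => hne <| by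
      have := (sin_eq_zero_iff_of_lt_of_lt (by linarith) (by linarith)).mp h
      linarith
    have hs_le : sin ((t - θ) / 2) ^ 2 ≤ sin ((t + θ) / 2) ^ 2 := by
      rw [← sub_nonneg, sin_sq_sub_sin_sq]
      ring_nf
      exact mul_nonneg (sin_nonneg_of_nonneg_of_le_pi ht0 htπ)
        (sin_nonneg_of_nonneg_of_le_pi hθ0.le hθπ.le)
    have key : 2 * (sin ((t - θ) / 2) ^ 2 * sin ((t + θ) / 2) ^ 2) *
        (fejerCosSum n (t - θ) - fejerCosSum n (t + θ)) =
        cos (N * t / 2) ^ 2 * (sin ((t + θ) / 2) ^ 2 - sin ((t - θ) / 2) ^ 2) := by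
      linear_combination sin ((t + θ) / 2) ^ 2 * hsub - sin ((t - θ) / 2) ^ 2 * hadd
    have hpos : 0 < 2 * (sin ((t - θ) / 2) ^ 2 * sin ((t + θ) / 2) ^ 2) := by positivity
    have hrhs := mul_nonneg (sq_nonneg (cos (N * t / 2))) (sub_nonneg.2 hs_le)
    rw [← key] at hrhs
    exact sub_nonneg.1 ((mul_nonneg_iff_of_pos_left hpos).mp hrhs)

lemma sum_sin_mul_sin_eq_fejerCosSum_sub (n : ℕ) (c t : ℝ) :
    ∑ j ∈ Icc 1 n, 2 * c * (1 - (j : ℝ) / (n + 1)) * sin (π * j / (n + 1)) * sin (j * t) =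
      c / (n + 1) * (fejerCosSum n (t - π / (n + 1)) - fejerCosSum n (t + π / (n + 1))) := by
  rw [fejerCosSum, fejerCosSum, ← sum_sub_distrib, mul_sum]
  refine sum_congr rfl fun j _ => ?_
  have hN : (n : ℝ) + 1 ≠ 0 := by positivity
  have hprod := two_mul_sin_mul_sin (j * t) (π * j / (n + 1))
  rw [show (j : ℝ) * t - π * j / (n + 1) = j * (t - π / (n + 1)) by ring,
    show (j : ℝ) * t + π * j / (n + 1) = j * (t + π / (n + 1)) by ring] at hprod
  rw [← mul_sub, ← hprod, one_sub_div hN]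
  ring

theorem stmt_14 (n : ℕ) (hn : 1 ≤ n) :
    ∀ t ∈ Set.Icc (0:ℝ) Real.pi,
      0 ≤ ∑ j ∈ Finset.Icc 1 n,
        2 * Real.tan (Real.pi / (2 * (n + 1))) * (1 - (j : ℝ) / (n + 1)) *
          Real.sin (Real.pi * j / (n + 1)) * Real.sin (j * t) := by
  intro t ht
  rw [sum_sin_mul_sin_eq_fejerCosSum_sub]
  have htan : 0 ≤ tan (π / (2 * (n + 1))) :=
    tan_nonneg_of_nonneg_of_le_pi_div_two (by positivity)
      (div_le_div_of_nonneg_left pi_pos.le two_pos (by linarith [n.cast_nonneg (α := ℝ)]))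
  exact mul_nonneg (div_nonneg htan (by positivity)) (sub_nonneg.2 (fejerCosSum_add_le_sub hn ht))
end

section
/- With a_j = 2 tan(π/(2(n+1))) · (1 - j/(n+1)) · sin(πj/(n+1)) for j = 1,...,n, the cosine polynomial C(t) = Σ_{j=1}^n a_j cos(jt) satisfies C(π) = Σ_{j=1}^n (-1)^j a_j = -tan²(π/(2(n+1))). -/
open Real Finset

/-!
With `θ = π / (2 (n + 1))` the coefficients are `a_j = (2 tan θ / (n + 1)) (n + 1 - j) sin (2 j θ)`
and `cos (j π) = (-1)^j`, so `C(π)` is an alternating weighted sine sum. Multiplied by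
`4 cos² θ`, that sum telescopes with an explicit primitive (product-to-sum formulas). At this
particular `θ` the upper boundary term vanishes, since `(2n + 1) θ = π - θ` and `2 n θ = π - 2θ`,
and the lower one is `(n + 1) sin 2θ`, which gives `C(π) = -tan² θ`.
-/

noncomputable def alternatingSinPrimitive (N θ : ℝ) (j : ℕ) : ℝ :=
  (-1) ^ j * (2 * (N - j) * sin ((2 * j + 1) * θ) * cos θ - sin (2 * j * θ))

theorem alternatingSinPrimitive_succ_sub (N θ : ℝ) (j : ℕ) :
    alternatingSinPrimitive N θ (j + 1) - alternatingSinPrimitive N θ j =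
      4 * cos θ ^ 2 * ((-1) ^ (j + 1) * ((N - (j + 1 : ℕ)) * sin (2 * (j + 1 : ℕ) * θ))) := by
  set x := 2 * ((j : ℝ) + 1) * θ
  have e₁ : (2 * ((j + 1 : ℕ) : ℝ) + 1) * θ = x + θ := by push_cast; ring
  have e₂ : (2 * (j : ℝ) + 1) * θ = x - θ := by ring
  have e₃ : 2 * (j : ℝ) * θ = x - 2 * θ := by ring
  have e₄ : 2 * ((j + 1 : ℕ) : ℝ) * θ = x := by push_cast; ring
  simp only [alternatingSinPrimitive, e₁, e₂, e₃, e₄, sin_add, sin_sub, sin_two_mul, cos_two_mul,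
    pow_succ]
  push_cast
  ring

theorem four_mul_cos_sq_mul_sum_alternating_sin (N θ : ℝ) (n : ℕ) :
    4 * cos θ ^ 2 * ∑ j ∈ Icc 1 n, (-1) ^ j * ((N - j) * sin (2 * j * θ)) =
      alternatingSinPrimitive N θ n - N * sin (2 * θ) := by
  induction n with
  | zero =>
    simp only [Icc_eq_empty_of_lt zero_lt_one, sum_empty, alternatingSinPrimitive, sin_two_mul]
    push_cast
    simp only [pow_zero, mul_zero, zero_mul, zero_add, one_mul, sin_zero]
    ring
  | succ n ih =>
    rw [sum_Icc_succ_top (by omega), mul_add, ih, ← alternatingSinPrimitive_succ_sub]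
    abel

theorem alternatingSinPrimitive_eq_zero (n : ℕ) :
    alternatingSinPrimitive (n + 1) (π / (2 * (n + 1))) n = 0 := by
  set θ := π / (2 * (n + 1))
  have h₁ : (2 * (n : ℝ) + 1) * θ = π - θ := by simp only [θ]; field_simp; ring
  have h₂ : 2 * (n : ℝ) * θ = π - 2 * θ := by simp only [θ]; field_simp; ring
  simp only [alternatingSinPrimitive, h₁, h₂, sin_pi_sub, sin_two_mul]
  ring

theorem sum_alternating_sin_pi_div (n : ℕ) (hn : 1 ≤ n) :
    ∑ j ∈ Icc 1 n, (-1) ^ j * (((n : ℝ) + 1 - j) * sin (2 * j * (π / (2 * (n + 1))))) =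
      -((n + 1) * tan (π / (2 * (n + 1))) / 2) := by
  set θ := π / (2 * (n + 1))
  have hcos : cos θ ≠ 0 := by
    refine (cos_pos_of_mem_Ioo ⟨by linarith [pi_pos, show 0 < θ by positivity], ?_⟩).ne'
    rw [div_lt_div_iff₀ (by positivity) two_pos]
    have : (1 : ℝ) ≤ n := by exact_mod_cast hn
    nlinarith [pi_pos]
  have h := four_mul_cos_sq_mul_sum_alternating_sin (n + 1) θ n
  rw [alternatingSinPrimitive_eq_zero, sin_two_mul] at h
  set S := ∑ j ∈ Icc 1 n, (-1) ^ j * (((n : ℝ) + 1 - j) * sin (2 * j * θ))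
  have hS : 2 * cos θ * (2 * cos θ * S + (n + 1) * sin θ) = 0 := by linear_combination h
  have hS' := (mul_eq_zero.mp hS).resolve_left (by simpa using hcos)
  rw [tan_eq_sin_div_cos]
  field_simp
  linear_combination hS'

theorem stmt_15 (n : ℕ) (hn : 1 ≤ n) :
    (∑ j ∈ Finset.Icc 1 n,
        2 * Real.tan (Real.pi / (2 * (n + 1))) * (1 - (j : ℝ) / (n + 1)) *
          Real.sin (Real.pi * j / (n + 1)) * Real.cos (j * Real.pi) =
      ∑ j ∈ Finset.Icc 1 n,
        (-1 : ℝ) ^ j * (2 * Real.tan (Real.pi / (2 * (n + 1))) *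
          (1 - (j : ℝ) / (n + 1)) * Real.sin (Real.pi * j / (n + 1)))) ∧
    ∑ j ∈ Finset.Icc 1 n,
        2 * Real.tan (Real.pi / (2 * (n + 1))) * (1 - (j : ℝ) / (n + 1)) *
          Real.sin (Real.pi * j / (n + 1)) * Real.cos (j * Real.pi) =
      -Real.tan (Real.pi / (2 * (n + 1))) ^ 2 := by
  set θ := π / (2 * (n + 1))
  have hC : ∑ j ∈ Icc 1 n, 2 * tan θ * (1 - (j : ℝ) / (n + 1)) * sin (π * j / (n + 1)) *
      cos (j * π) = ∑ j ∈ Icc 1 n, (-1) ^ j * (2 * tan θ * (1 - (j : ℝ) / (n + 1)) *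
        sin (π * j / (n + 1))) :=
    sum_congr rfl fun j _ ↦ by rw [cos_nat_mul_pi]; ring
  refine ⟨hC, ?_⟩
  have hterm : ∀ j ∈ Icc 1 n, (-1) ^ j * (2 * tan θ * (1 - (j : ℝ) / (n + 1)) *
      sin (π * j / (n + 1))) =
        2 * tan θ / (n + 1) * ((-1) ^ j * (((n : ℝ) + 1 - j) * sin (2 * j * θ))) := by
    intro j _
    have hangle : π * j / ((n : ℝ) + 1) = 2 * j * θ := by simp only [θ]; field_simp
    rw [hangle]
    field_simp
  rw [hC, sum_congr rfl hterm, ← mul_sum, sum_alternating_sin_pi_div n hn]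
  field_simp
  ring
end

section
/- Let γ_1,...,γ_n be real numbers such that the polynomial γ_1 + 2γ_2 cos t + 2γ_3 cos 2t + ... + 2γ_n cos(n-1)t is nonnegative for all real t. Then |γ_2| ≤ cos(π/(n+1)) · |γ_1| (Fejér's inequality). -/
/-!
Evaluate the cosine polynomial `p` at the `N = n + 1` nodes `u_j = (2j + 1)π/N` (shifted by an
arbitrary `φ`). Since `∑_j cos (m u_j) = 0` for `0 < m < N`, averaging over the nodes recovers the
coefficients: `∑_j p(u_j) = N γ₁` and `∑_j cos u_j · p(u_j) = N γ₂`. Every node satisfies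
`cos u_j ≤ cos (π/N)`, so `0 ≤ ∑_j (cos (π/N) - cos u_j) p(u_j) = N (cos (π/N) γ₁ - γ₂)`.
The shift `φ = π` flips the sign of `cos u_j` and gives the bound for `-γ₂`, and `γ₁ ≥ 0` comes
from the first average.
-/

open Real Finset

noncomputable def fejerNode (N : ℕ) (φ : ℝ) (j : ℕ) : ℝ := (2 * j + 1) * (π / N) + φ

noncomputable def fejerPoly (n : ℕ) (γ : ℕ → ℝ) (t : ℝ) : ℝ :=
  γ 1 + ∑ k ∈ Icc 2 n, 2 * γ k * cos ((k - 1 : ℕ) * t)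

theorem two_mul_sin_mul_sum_cos_odd_mul_add (N : ℕ) (x a : ℝ) :
    2 * sin x * ∑ j ∈ range N, cos ((2 * j + 1) * x + a) = sin (2 * N * x + a) - sin a := by
  induction N with
  | zero => simp
  | succ N ih =>
    rw [sum_range_succ, mul_add, ih]
    push_cast
    rw [show 2 * ((N : ℝ) + 1) * x + a = (2 * N + 1) * x + a + x by ring,
      show 2 * (N : ℝ) * x + a = (2 * N + 1) * x + a - x by ring, sin_add, sin_sub]
    ring

theorem sum_cos_nat_mul_fejerNode {N m : ℕ} (hm : 0 < m) (hmN : m < N) (φ : ℝ) :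
    ∑ j ∈ range N, cos (m * fejerNode N φ j) = 0 := by
  have hN : (0 : ℝ) < N := by exact_mod_cast hm.trans hmN
  have hmN' : (m : ℝ) < N := by exact_mod_cast hmN
  set x : ℝ := m * (π / N) with hx
  have hsin : sin x ≠ 0 := by
    refine (sin_pos_of_pos_of_lt_pi (by positivity) ?_).ne'
    rw [hx, mul_div_assoc', div_lt_iff₀ hN]
    nlinarith [pi_pos]
  have h := two_mul_sin_mul_sum_cos_odd_mul_add N x (m * φ)
  rw [show 2 * (N : ℝ) * x + m * φ = m * φ + m * (2 * π) by rw [hx]; field_simp; ring,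
    sin_add_nat_mul_two_pi, sub_self, mul_eq_zero] at h
  rw [← h.resolve_left (mul_ne_zero two_ne_zero hsin)]
  refine sum_congr rfl fun j _ => ?_
  rw [fejerNode, hx]
  ring_nf

theorem sum_cos_mul_cos_nat_mul_fejerNode {N m : ℕ} (hm : 0 < m) (hmN : m + 1 < N) (φ : ℝ) :
    ∑ j ∈ range N, cos (fejerNode N φ j) * cos (m * fejerNode N φ j) =
      if m = 1 then (N : ℝ) / 2 else 0 := by
  have hprod : ∀ u : ℝ, cos u * cos (m * u) = (cos ((m + 1 : ℕ) * u) + cos ((m - 1 : ℕ) * u)) / 2 := by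
    intro u
    rw [Nat.cast_sub hm, show ((m + 1 : ℕ) : ℝ) * u = m * u + u by push_cast; ring,
      show ((m : ℝ) - (1 : ℕ)) * u = m * u - u by push_cast; ring, cos_add, cos_sub]
    ring
  simp only [hprod]
  rw [← sum_div, sum_add_distrib, sum_cos_nat_mul_fejerNode (by omega) hmN, zero_add]
  split_ifs with h1
  · simp [h1]
  · rw [sum_cos_nat_mul_fejerNode (by omega) (by omega), zero_div]

theorem sum_fejerPoly_fejerNode {n N : ℕ} (hnN : n < N) (γ : ℕ → ℝ) (φ : ℝ) :
    ∑ j ∈ range N, fejerPoly n γ (fejerNode N φ j) = N * γ 1 := by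
  simp only [fejerPoly]
  rw [sum_add_distrib, sum_const, card_range, nsmul_eq_mul, sum_comm, add_eq_left]
  refine sum_eq_zero fun k hk => ?_
  obtain ⟨hk2, hkn⟩ := mem_Icc.1 hk
  rw [← mul_sum, sum_cos_nat_mul_fejerNode (by omega) (by omega), mul_zero]

theorem sum_cos_mul_fejerPoly_fejerNode {n N : ℕ} (hn : 2 ≤ n) (hnN : n < N) (γ : ℕ → ℝ) (φ : ℝ) :
    ∑ j ∈ range N, cos (fejerNode N φ j) * fejerPoly n γ (fejerNode N φ j) = N * γ 2 := by
  simp only [fejerPoly, mul_add, mul_sum]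
  rw [sum_add_distrib, ← sum_mul, sum_comm]
  have hfirst := sum_cos_nat_mul_fejerNode one_pos (by omega : 1 < N) φ
  simp only [Nat.cast_one, one_mul] at hfirst
  rw [hfirst, zero_mul, zero_add]
  have hterm : ∀ k ∈ Icc 2 n, ∑ j ∈ range N,
      cos (fejerNode N φ j) * (2 * γ k * cos ((k - 1 : ℕ) * fejerNode N φ j)) =
        if k = 2 then N * γ 2 else 0 := by
    intro k hk
    obtain ⟨hk2, hkn⟩ := mem_Icc.1 hk
    simp only [mul_left_comm (cos _) (2 * γ k)]
    rw [← mul_sum, sum_cos_mul_cos_nat_mul_fejerNode (by omega) (by omega)]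
    by_cases h : k = 2
    · subst h
      rw [if_pos rfl, if_pos rfl]
      ring
    · rw [if_neg (by omega), if_neg h, mul_zero]
  rw [sum_congr rfl hterm, sum_ite_eq' (Icc 2 n), if_pos (mem_Icc.2 ⟨le_rfl, hn⟩)]

theorem cos_fejerNode_zero_le {N j : ℕ} (hj : j < N) : cos (fejerNode N 0 j) ≤ cos (π / N) := by
  have hN : (0 : ℝ) < N := by exact_mod_cast (j.zero_le.trans_lt hj)
  have hjN : (j : ℝ) + 1 ≤ N := by exact_mod_cast hj
  have hθ : 0 < π / N := by positivity
  have hNθ : N * (π / N) = π := by field_simp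
  have hlo : π / N ≤ fejerNode N 0 j := by
    rw [fejerNode, add_zero]; nlinarith [(j.cast_nonneg : (0 : ℝ) ≤ j)]
  have hhi : fejerNode N 0 j ≤ 2 * π - π / N := by
    rw [fejerNode, add_zero]; nlinarith
  rcases le_total (fejerNode N 0 j) π with h | h
  · exact cos_le_cos_of_nonneg_of_le_pi hθ.le h hlo
  · rw [← cos_two_pi_sub]
    exact cos_le_cos_of_nonneg_of_le_pi hθ.le (by linarith) (by linarith)

theorem cos_fejerNode_pi (N j : ℕ) : cos (fejerNode N π j) = -cos (fejerNode N 0 j) := by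
  rw [fejerNode, fejerNode, add_zero, cos_add_pi]

theorem mul_coeff_two_le_of_fejerNode {n N : ℕ} (hn : 2 ≤ n) (hnN : n < N) (γ : ℕ → ℝ)
    (hpos : ∀ t, 0 ≤ fejerPoly n γ t) (φ s : ℝ)
    (hw : ∀ j < N, s * cos (fejerNode N φ j) ≤ cos (π / N)) :
    s * γ 2 ≤ cos (π / N) * γ 1 := by
  have hN : (0 : ℝ) < N := by exact_mod_cast (n.zero_le.trans_lt hnN)
  have h : 0 ≤ ∑ j ∈ range N,
      (cos (π / N) - s * cos (fejerNode N φ j)) * fejerPoly n γ (fejerNode N φ j) :=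
    sum_nonneg fun j hj => mul_nonneg (sub_nonneg.2 (hw j (mem_range.1 hj))) (hpos _)
  simp only [sub_mul, sum_sub_distrib, mul_assoc, ← mul_sum] at h
  rw [sum_fejerPoly_fejerNode hnN, sum_cos_mul_fejerPoly_fejerNode hn hnN] at h
  nlinarith

theorem coeff_one_nonneg {n : ℕ} (γ : ℕ → ℝ) (hpos : ∀ t, 0 ≤ fejerPoly n γ t) : 0 ≤ γ 1 := by
  have h := sum_fejerPoly_fejerNode n.lt_succ_self γ 0
  have : 0 ≤ ((n + 1 : ℕ) : ℝ) * γ 1 := h ▸ sum_nonneg fun j _ => hpos _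
  exact nonneg_of_mul_nonneg_right (by rwa [mul_comm] at this) (by positivity)

theorem stmt_16 (n : ℕ) (hn : 2 ≤ n) (γ : ℕ → ℝ)
    (hpos : ∀ t : ℝ,
      0 ≤ γ 1 + ∑ k ∈ Finset.Icc 2 n, 2 * γ k * Real.cos ((k - 1 : ℕ) * t)) :
    |γ 2| ≤ Real.cos (Real.pi / (n + 1)) * |γ 1| := by
  have hθ : π / ((n + 1 : ℕ) : ℝ) = π / (n + 1) := by push_cast; rfl
  have hupper := mul_coeff_two_le_of_fejerNode hn n.lt_succ_self γ hpos 0 1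
    fun j hj => by simpa using cos_fejerNode_zero_le hj
  have hlower := mul_coeff_two_le_of_fejerNode hn n.lt_succ_self γ hpos π (-1)
    fun j hj => by simpa [cos_fejerNode_pi] using cos_fejerNode_zero_le hj
  rw [hθ] at hupper hlower
  rw [abs_of_nonneg (coeff_one_nonneg γ hpos), abs_le]
  constructor <;> linarith
end

section
/- Let a_1,...,a_n be real with Σ_{j=1}^n a_j = 1, and define γ_s = Σ_{j≡s mod 2, s ≤ j ≤ n} a_j for s = 1,...,n. Then Σ_{j=1}^n a_j sin(jt) = sin t · (γ_1 + 2 Σ_{k=2}^n γ_k cos((k-1)t)) for all t, and Σ_{j=1}^n (-1)^j a_j = -γ_1 + γ_2, and γ_1 + γ_2 = 1. -/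
/-!
Telescoping `sin ((j + 2) t) - sin (j t) = 2 sin t cos ((j + 1) t)` writes `sin (j t) / sin t` as
`[j odd] + 2 ∑ cos ((k - 1) t)` over `2 ≤ k ≤ j` with `k ≡ j (mod 2)`. Summing against `a` and
exchanging the two sums collects the coefficient of `cos ((k - 1) t)` into exactly `γ k`.
The two identities for `γ 1, γ 2` hold because they are the sums of `a` over the odd and the
even indices.
-/

open Real Finset

theorem filter_Icc_two_add_two_mod_two (j : ℕ) :
    (Icc 2 (j + 2)).filter (fun k => k % 2 = (j + 2) % 2) =
      insert (j + 2) ((Icc 2 j).filter (fun k => k % 2 = j % 2)) := by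
  ext k
  simp only [mem_filter, mem_insert, mem_Icc]
  omega

theorem sin_nat_mul_eq_sin_mul_sum_cos (t : ℝ) (j : ℕ) :
    sin (j * t) = sin t * ((if j % 2 = 1 then 1 else 0) +
      2 * ∑ k ∈ (Icc 2 j).filter (fun k => k % 2 = j % 2), cos ((k - 1 : ℕ) * t)) := by
  induction j using Nat.twoStepInduction with
  | zero => simp
  | one => simp
  | more j ih _ =>
    have hstep : sin ((j + 2 : ℕ) * t) = sin (j * t) + 2 * sin t * cos ((j + 1 : ℕ) * t) := by
      rw [← sub_eq_iff_eq_add', sin_sub_sin]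
      congr 3 <;> push_cast <;> ring
    rw [hstep, ih, filter_Icc_two_add_two_mod_two, sum_insert (by simp),
      Nat.add_mod_right, show j + 2 - 1 = j + 1 from rfl]
    ring

theorem sum_mul_sum_filter_mod_two_comm {R : Type*} [CommSemiring R] (n : ℕ) (a f : ℕ → R) :
    ∑ j ∈ Icc 1 n, a j * ∑ k ∈ (Icc 2 j).filter (fun k => k % 2 = j % 2), f k =
      ∑ k ∈ Icc 2 n, (∑ j ∈ (Icc k n).filter (fun j => j % 2 = k % 2), a j) * f k := by
  simp_rw [mul_sum, sum_mul]
  refine sum_comm' fun j k => ?_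
  simp only [mem_filter, mem_Icc]
  omega

theorem sum_mul_sin_nat_mul_eq_sin_mul (n : ℕ) (a γ : ℕ → ℝ)
    (hγ : ∀ s, 1 ≤ s → γ s = ∑ j ∈ (Icc s n).filter (fun j => j % 2 = s % 2), a j) (t : ℝ) :
    ∑ j ∈ Icc 1 n, a j * sin (j * t) =
      sin t * (γ 1 + 2 * ∑ k ∈ Icc 2 n, γ k * cos ((k - 1 : ℕ) * t)) :=
  calc ∑ j ∈ Icc 1 n, a j * sin (j * t)
      = sin t * (∑ j ∈ Icc 1 n, (if j % 2 = 1 then a j else 0) + 2 * ∑ j ∈ Icc 1 n,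
          a j * ∑ k ∈ (Icc 2 j).filter (fun k => k % 2 = j % 2), cos ((k - 1 : ℕ) * t)) := by
        rw [mul_sum, mul_add, mul_sum, mul_sum, ← sum_add_distrib]
        refine sum_congr rfl fun j _ => ?_
        rw [sin_nat_mul_eq_sin_mul_sum_cos]
        split_ifs <;> ring
    _ = _ := by
        rw [← sum_filter, ← hγ 1 le_rfl, sum_mul_sum_filter_mod_two_comm]
        congr 3
        refine sum_congr rfl fun k hk => ?_
        rw [hγ k (one_le_two.trans (mem_Icc.mp hk).1)]

theorem sum_eq_sum_filter_odd_add_sum_filter_even {M : Type*} [AddCommMonoid M] (s : Finset ℕ)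
    (f : ℕ → M) :
    ∑ j ∈ s, f j =
      ∑ j ∈ s.filter (fun j => j % 2 = 1), f j + ∑ j ∈ s.filter (fun j => j % 2 = 0), f j := by
  simp_rw [← sum_filter_add_sum_filter_not s (fun j => j % 2 = 1), Nat.mod_two_ne_one]

theorem stmt_19_general (n : ℕ) (a γ : ℕ → ℝ)
    (ha : ∑ j ∈ Finset.Icc 1 n, a j = 1)
    (hγ : ∀ s, 1 ≤ s →
      γ s = ∑ j ∈ (Finset.Icc s n).filter (fun j => j % 2 = s % 2), a j) :
    (∀ t : ℝ, ∑ j ∈ Finset.Icc 1 n, a j * Real.sin (j * t) =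
      Real.sin t * (γ 1 + 2 * ∑ k ∈ Finset.Icc 2 n, γ k * Real.cos ((k - 1 : ℕ) * t))) ∧
    (∑ j ∈ Finset.Icc 1 n, (-1 : ℝ) ^ j * a j = -γ 1 + γ 2) ∧
    γ 1 + γ 2 = 1 := by
  have hγ₁ : γ 1 = ∑ j ∈ (Icc 1 n).filter (fun j => j % 2 = 1), a j := hγ 1 le_rfl
  have hγ₂ : γ 2 = ∑ j ∈ (Icc 1 n).filter (fun j => j % 2 = 0), a j := by
    rw [hγ 2 one_le_two]
    congr 1
    ext j
    simp only [mem_filter, mem_Icc]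
    omega
  refine ⟨sum_mul_sin_nat_mul_eq_sin_mul n a γ hγ, ?_, ?_⟩
  · rw [hγ₁, hγ₂, sum_eq_sum_filter_odd_add_sum_filter_even, ← sum_neg_distrib]
    congr 1 <;> refine sum_congr rfl fun j hj => ?_ <;>
      simp [neg_one_pow_eq_ite, Nat.even_iff, (mem_filter.mp hj).2]
  · rw [hγ₁, hγ₂, ← ha, sum_eq_sum_filter_odd_add_sum_filter_even (Icc 1 n)]

theorem stmt_19 (n : ℕ) (hn : 1 ≤ n) (a γ : ℕ → ℝ)
    (ha : ∑ j ∈ Finset.Icc 1 n, a j = 1)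
    (hγ : ∀ s, 1 ≤ s →
      γ s = ∑ j ∈ (Finset.Icc s n).filter (fun j => j % 2 = s % 2), a j) :
    (∀ t : ℝ, ∑ j ∈ Finset.Icc 1 n, a j * Real.sin (j * t) =
      Real.sin t * (γ 1 + 2 * ∑ k ∈ Finset.Icc 2 n, γ k * Real.cos ((k - 1 : ℕ) * t))) ∧
    (∑ j ∈ Finset.Icc 1 n, (-1 : ℝ) ^ j * a j = -γ 1 + γ 2) ∧
    γ 1 + γ 2 = 1 :=
  stmt_19_general n a γ ha hγ
end
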